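/- Let P, Q ∈ ℝ[z] be coprime of the same degree with positive leading coefficients, P reciprocal, Q antireciprocal, all roots of P and Q simple and lying on the unit circle, and the roots of P and Q interlacing on the unit circle. Then every root of P² + Q² lies on the unit circle. -/

import Mathlib

/-!
On the unit circle, reciprocity makes `e^{-idt/2} P(e^{it})` real and antireciprocity makes
`e^{-idt/2} Q(e^{it})` purely imaginary. Factoring over the roots `e^{iφ_j}` gives
`P(e^{it}) = c_P e^{idt/2} ∏ⱼ sin ((t - φ_j) / 2)`, and likewise for `Q`, so on the circle
`P - iQ` is `e^{idt/2}` times the real function `H = c_P s_P + c_Q s_Q`. At a root of `Q` only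
the term `c_P s_P` survives, and interlacing makes `s_P` alternate in sign from one root of `Q`
to the next. So `H` vanishes between any two consecutive roots of `Q` (once around the circle),
which gives `d` distinct roots of `P - iQ` on the circle, hence all of them. Finally
`P² + Q² = (P + iQ)(P - iQ)`, and the roots of `P + iQ` are the conjugates of those of `P - iQ`.
-/

open Polynomial

/-- The roots of `P` and `Q` all lie on the unit circle and interlace there:
there are angles `θ 0 < θ 1 < ⋯ < θ (2d-1)`, lying within one period of length `2π`,
such that the roots of `P` are the points `exp(i θ (2j))` and the roots of `Q` are
the points `exp(i θ (2j+1))`. -/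
def UnitCircleInterlace (P Q : Polynomial ℝ) (d : ℕ) : Prop :=
  ∃ θ : ℕ → ℝ,
    (∀ i j : ℕ, i < j → j < 2 * d → θ i < θ j) ∧
    θ (2 * d - 1) < θ 0 + 2 * Real.pi ∧
    (∀ z : ℂ, Polynomial.aeval z P = 0 ↔
      ∃ j : ℕ, j < d ∧ z = Complex.exp (θ (2 * j) * Complex.I)) ∧
    (∀ z : ℂ, Polynomial.aeval z Q = 0 ↔
      ∃ j : ℕ, j < d ∧ z = Complex.exp (θ (2 * j + 1) * Complex.I))

open Finset ComplexConjugate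
open Complex (I)
open scoped Real

theorem Polynomial.roots_eq_val_of_natDegree_le_card {R : Type*} [CommRing R] [IsDomain R]
    {F : R[X]} (hF : F ≠ 0) {S : Finset R} (hS : ∀ x ∈ S, F.IsRoot x)
    (hcard : F.natDegree ≤ S.card) : F.roots = S.val :=
  (Multiset.eq_of_le_of_card_le
    ((Multiset.le_iff_subset S.nodup).2 fun x hx => (mem_roots hF).2 (hS x hx))
    ((card_roots' F).trans hcard)).symm

theorem injOn_exp_ofReal_mul_I_Ico {a b : ℝ} (h : b - a ≤ 2 * π) :
    Set.InjOn (fun t : ℝ => Complex.exp (t * I)) (Set.Ico a b) := fun _ hx _ hy hxy =>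
  Circle.exp_injOn_Ico h hx hy (Circle.ext hxy)

theorem exists_mem_Ioo_eq_zero_of_mul_neg {f : ℝ → ℝ} {a b : ℝ} (hab : a ≤ b)
    (hf : ContinuousOn f (Set.Icc a b)) (h : f a * f b < 0) : ∃ c ∈ Set.Ioo a b, f c = 0 := by
  rcases mul_neg_iff.1 h with ⟨ha, hb⟩ | ⟨ha, hb⟩
  · exact intermediate_value_Ioo' hab hf ⟨hb, ha⟩
  · exact intermediate_value_Ioo hab hf ⟨ha, hb⟩

theorem exp_mul_I_sub_exp_mul_I (a b : ℝ) :
    Complex.exp (a * I) - Complex.exp (b * I)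
      = Complex.exp (((a + b) / 2 : ℝ) * I) * (2 * I * Real.sin ((a - b) / 2)) := by
  have hsin : (2 * I * Real.sin ((a - b) / 2) : ℂ)
      = Complex.exp (((a - b) / 2 : ℝ) * I) - Complex.exp (-((a - b) / 2 : ℝ) * I) := by
    rw [Complex.ofReal_sin, Complex.sin]
    linear_combination (Complex.exp (-((a - b) / 2 : ℝ) * I)
      - Complex.exp (((a - b) / 2 : ℝ) * I)) * Complex.I_sq
  rw [hsin, mul_sub, ← Complex.exp_add, ← Complex.exp_add]
  congr 2 <;> push_cast <;> ring

noncomputable def sinProd (φ : ℕ → ℝ) (d : ℕ) (t : ℝ) : ℝ :=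
  ∏ j ∈ range d, Real.sin ((t - φ j) / 2)

section SinProd

open Real

variable {φ : ℕ → ℝ} {d : ℕ}

theorem sinProd_eq_zero {j : ℕ} (hj : j < d) : sinProd φ d (φ j) = 0 :=
  prod_eq_zero (mem_range.2 hj) (by simp)

theorem sinProd_add_two_pi (t : ℝ) : sinProd φ d (t + 2 * π) = (-1) ^ d * sinProd φ d t := by
  have h : ∀ j ∈ range d, sin ((t + 2 * π - φ j) / 2) = -sin ((t - φ j) / 2) := fun j _ => by
    rw [← sin_add_pi]; ring_nf
  rw [sinProd, prod_congr rfl h, prod_neg, card_range, sinProd]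

theorem neg_one_pow_mul_sinProd_pos {m : ℕ} {t : ℝ} (hm : m ≤ d)
    (hbelow : ∀ k < m, φ k < t ∧ t < φ k + 2 * π)
    (habove : ∀ k, m ≤ k → k < d → t < φ k ∧ φ k < t + 2 * π) :
    0 < (-1) ^ (d - m) * sinProd φ d t := by
  have hlow : 0 < ∏ k ∈ range m, sin ((t - φ k) / 2) := prod_pos fun k hk => by
    obtain ⟨h1, h2⟩ := hbelow k (mem_range.1 hk)
    exact sin_pos_of_pos_of_lt_pi (by linarith) (by linarith)
  have hhigh : 0 < ∏ k ∈ Ico m d, -sin ((t - φ k) / 2) := prod_pos fun k hk => by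
    obtain ⟨h1, h2⟩ := habove k (mem_Ico.1 hk).1 (mem_Ico.1 hk).2
    exact neg_pos.2 (sin_neg_of_neg_of_neg_pi_lt (by linarith) (by linarith))
  rw [prod_neg, Nat.card_Ico] at hhigh
  rw [sinProd, ← prod_range_mul_prod_Ico _ hm, mul_left_comm]
  exact mul_pos hlow hhigh

end SinProd

theorem prod_exp_mul_I_sub (φ : ℕ → ℝ) (d : ℕ) (t : ℝ) :
    ∏ j ∈ range d, (Complex.exp (t * I) - Complex.exp (φ j * I))
      = (2 * I) ^ d * Complex.exp (((∑ j ∈ range d, φ j) / 2 : ℝ) * I)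
        * Complex.exp ((d * t / 2 : ℝ) * I) * sinProd φ d t := by
  simp only [exp_mul_I_sub_exp_mul_I, prod_mul_distrib, prod_const, card_range, ← Complex.exp_sum,
    sinProd, Complex.ofReal_prod]
  have hsum : ∑ j ∈ range d, (((t + φ j) / 2 : ℝ) : ℂ) * I
      = (((∑ j ∈ range d, φ j) / 2 : ℝ) : ℂ) * I + ((d * t / 2 : ℝ) : ℂ) * I := by
    push_cast
    rw [← sum_mul, ← sum_div, sum_add_distrib, sum_const, card_range, nsmul_eq_mul]
    ring
  rw [hsum, Complex.exp_add]
  ring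

theorem exists_aeval_exp_mul_I_eq {P : ℝ[X]} {d : ℕ} (hd : P.natDegree = d) (hP : P ≠ 0)
    {φ : ℕ → ℝ} (hinj : Set.InjOn (fun j => Complex.exp (φ j * I)) (range d))
    (hroot : ∀ j < d, aeval (Complex.exp (φ j * I)) P = 0) :
    ∃ C : ℂ, C ≠ 0 ∧ ∀ t : ℝ,
      aeval (Complex.exp (t * I)) P = C * Complex.exp ((d * t / 2 : ℝ) * I) * sinProd φ d t := by
  set F := P.map (algebraMap ℝ ℂ)
  set S := (range d).image fun j => Complex.exp (φ j * I)
  have hF : F ≠ 0 := (Polynomial.map_ne_zero_iff (algebraMap ℝ ℂ).injective).2 hP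
  have hFd : F.natDegree = S.card := by
    rw [natDegree_map, card_image_of_injOn hinj, card_range, hd]
  have hroots : F.roots = S.val := by
    refine roots_eq_val_of_natDegree_le_card hF ?_ hFd.le
    simp only [S, mem_image, mem_range]
    rintro _ ⟨j, hj, rfl⟩
    rw [IsRoot, eval_map_algebraMap]
    exact hroot j hj
  have hfac := C_leadingCoeff_mul_prod_multiset_X_sub_C (p := F) (by rw [hroots, hFd]; rfl)
  refine ⟨F.leadingCoeff * (2 * I) ^ d * Complex.exp (((∑ j ∈ range d, φ j) / 2 : ℝ) * I),
    ?_, ?_⟩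
  · exact mul_ne_zero (mul_ne_zero (leadingCoeff_ne_zero.2 hF) (pow_ne_zero _ (by simp)))
      (Complex.exp_ne_zero _)
  · intro t
    have heval : aeval (Complex.exp (t * I)) P
        = F.leadingCoeff * ∏ j ∈ range d, (Complex.exp (t * I) - Complex.exp (φ j * I)) := by
      rw [← eval_map_algebraMap]
      change eval _ F = _
      conv_lhs => rw [← hfac]
      rw [eval_mul, eval_C, eval_multiset_prod, hroots, Multiset.map_map, ← prod_eq_multiset_prod,
        prod_image hinj]
      simp
    rw [heval, prod_exp_mul_I_sub]
    ring

theorem conj_aeval_mul_pow_of_reflect_eq_smul {P : ℝ[X]} {d : ℕ} (hd : P.natDegree ≤ d)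
    {σ : ℝ} (hP : reflect d P = σ • P) {z : ℂ} (hz : ‖z‖ = 1) :
    σ * conj (aeval z P) * z ^ d = aeval z P := by
  have hz0 : z ≠ 0 := by rintro rfl; simp at hz
  let _ : Invertible z := invertibleOfNonzero hz0
  have h := eval₂_reflect_mul_pow (algebraMap ℝ ℂ) z d P hd
  rwa [hP, invOf_eq_inv, Complex.inv_eq_conj hz, smul_eq_C_mul, eval₂_mul, eval₂_C,
    ← aeval_def, aeval_conj, ← aeval_def] at h

theorem mul_conj_eq_of_forall_aeval_exp_mul_I_eq {P : ℝ[X]} {d : ℕ} (hd : P.natDegree ≤ d)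
    {σ : ℝ} (hP : reflect d P = σ • P) {C : ℂ} {s : ℝ → ℝ}
    (hform : ∀ t : ℝ,
      aeval (Complex.exp (t * I)) P = C * Complex.exp ((d * t / 2 : ℝ) * I) * s t)
    {t₀ : ℝ} (ht₀ : s t₀ ≠ 0) : σ * conj C = C := by
  set E := Complex.exp ((d * t₀ / 2 : ℝ) * I) with hEdef
  have hEE : Complex.exp (t₀ * I) ^ d = E * E := by
    rw [← Complex.exp_add, ← Complex.exp_nat_mul]
    congr 1
    push_cast
    ring
  have hE : conj E * E = 1 := by
    rw [Complex.conj_mul', hEdef, Complex.norm_exp_ofReal_mul_I]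
    norm_num
  have h := conj_aeval_mul_pow_of_reflect_eq_smul hd hP (Complex.norm_exp_ofReal_mul_I t₀)
  rw [hform, hEE, map_mul, map_mul, Complex.conj_ofReal, ← hEdef] at h
  have hEs : E * s t₀ ≠ 0 :=
    mul_ne_zero (Complex.exp_ne_zero _) (Complex.ofReal_ne_zero.2 ht₀)
  refine mul_right_cancel₀ hEs ?_
  linear_combination h - σ * conj C * E * s t₀ * hE

theorem exists_card_eq_of_sign_changes {H : ℝ → ℝ} (hH : Continuous H) {t : ℕ → ℝ}
    {d : ℕ} (ht : ∀ j < d, t j < t (j + 1)) (hturn : t d ≤ t 0 + 2 * π)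
    (hsgn : ∀ j < d, H (t j) * H (t (j + 1)) < 0) :
    ∃ S : Finset ℂ, S.card = d ∧ ∀ x ∈ S, ∃ u, H u = 0 ∧ x = Complex.exp (u * I) := by
  choose! u hu hHu using fun j (hj : j < d) =>
    exists_mem_Ioo_eq_zero_of_mul_neg (ht j hj).le hH.continuousOn (hsgn j hj)
  have htmono : StrictMonoOn t (Set.Iic d) := strictMonoOn_Iic_of_lt_succ fun j hj => ht j hj
  have hu_mono : StrictMonoOn u (range d) := fun i hi j hj hij => by
    have hi : i < d := mem_range.1 hi
    have hj : j < d := mem_range.1 hj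
    calc u i < t (i + 1) := (hu i hi).2
      _ ≤ t j := htmono.monotoneOn (Set.mem_Iic.2 (by omega)) (Set.mem_Iic.2 (by omega)) hij
      _ < u j := (hu j hj).1
  have hu_turn : Set.MapsTo u (range d) (Set.Ico (t 0) (t 0 + 2 * π)) := fun j hj => by
    have hj : j < d := mem_range.1 hj
    have h0 : t 0 ≤ t j :=
      htmono.monotoneOn (Set.mem_Iic.2 (Nat.zero_le d)) (Set.mem_Iic.2 hj.le) (Nat.zero_le j)
    have h1 : t (j + 1) ≤ t d := htmono.monotoneOn (Set.mem_Iic.2 hj) (Set.mem_Iic.2 le_rfl) hj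
    exact ⟨h0.trans (hu j hj).1.le, by linarith [(hu j hj).2]⟩
  have hinj := (injOn_exp_ofReal_mul_I_Ico (by simp)).comp hu_mono.injOn hu_turn
  refine ⟨(range d).image fun j => Complex.exp (u j * I), ?_, ?_⟩
  · exact (card_image_of_injOn hinj).trans (card_range d)
  · simp only [mem_image, mem_range]
    rintro _ ⟨j, hj, rfl⟩
    exact ⟨u j, hHu j hj, rfl⟩

theorem mem_of_aeval_sub_I_mul_aeval_eq_zero {P Q : ℝ[X]} {d : ℕ} (hP0 : P ≠ 0)
    (hP : P.natDegree = d) (hQ : Q.natDegree ≤ d) {S : Finset ℂ}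
    (hS : ∀ x ∈ S, aeval x P - I * aeval x Q = 0) (hcard : d ≤ S.card) {w : ℂ}
    (hw : aeval w P - I * aeval w Q = 0) : w ∈ S := by
  set R := P.map (algebraMap ℝ ℂ) - C I * Q.map (algebraMap ℝ ℂ)
  have hR : ∀ x, R.IsRoot x ↔ aeval x P - I * aeval x Q = 0 := fun x => by
    simp [R, eval_map_algebraMap]
  have hR0 : R ≠ 0 := fun h => by
    have := congrArg (fun F => (F.coeff d).re) h
    exact hP0 (by simpa [R, ← hP] using this)
  have hRd : R.natDegree ≤ d := by
    refine (natDegree_sub_le _ _).trans (max_le ?_ ?_)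
    · rw [natDegree_map, hP]
    · exact (natDegree_C_mul_le _ _).trans (by rwa [natDegree_map])
  have hroots := roots_eq_val_of_natDegree_le_card hR0 (fun x hx => (hR x).2 (hS x hx))
    (hRd.trans hcard)
  rw [← Finset.mem_val, ← hroots, mem_roots hR0]
  exact (hR w).2 hw

theorem mul_neg_of_neg_one_pow_mul_pos {x y : ℝ} {n : ℕ} (hx : 0 < (-1) ^ (n + 1) * x)
    (hy : 0 < (-1) ^ n * y) : x * y < 0 := by
  have h : ((-1 : ℝ) ^ n) ^ 2 = 1 := by rw [← pow_mul, mul_comm, pow_mul]; norm_num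
  have := mul_pos hx hy
  linear_combination this - x * y * h

noncomputable def oddAnglesClosed (θ : ℕ → ℝ) (d j : ℕ) : ℝ :=
  if j < d then θ (2 * j + 1) else θ 1 + 2 * π

section Interlacing

variable {θ : ℕ → ℝ} {d : ℕ}

theorem interlace_le (hθ : ∀ i j : ℕ, i < j → j < 2 * d → θ i < θ j) {i j : ℕ}
    (hij : i ≤ j) (hj : j < 2 * d) : θ i ≤ θ j :=
  hij.eq_or_lt.elim (fun h => h ▸ le_rfl) fun h => (hθ i j h hj).le

theorem interlace_lt_add_two_pi (hθ : ∀ i j : ℕ, i < j → j < 2 * d → θ i < θ j)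
    (hθ2π : θ (2 * d - 1) < θ 0 + 2 * π) {i j : ℕ} (hi : i < 2 * d) (hj : j < 2 * d) :
    θ j < θ i + 2 * π := by
  linarith [interlace_le hθ (Nat.zero_le i) hi,
    interlace_le hθ (Nat.le_sub_one_of_lt hj) (Nat.sub_one_lt_of_lt hj)]

theorem interlace_injOn_exp (hθ : ∀ i j : ℕ, i < j → j < 2 * d → θ i < θ j)
    (hθ2π : θ (2 * d - 1) < θ 0 + 2 * π) :
    Set.InjOn (fun k => Complex.exp (θ k * I)) (Set.Iio (2 * d)) := by
  have hmono : StrictMonoOn θ (Set.Iio (2 * d)) := fun i _ j hj hij => hθ i j hij hj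
  refine (injOn_exp_ofReal_mul_I_Ico (a := θ 0) (b := θ 0 + 2 * π) (by simp)).comp hmono.injOn ?_
  intro k hk
  have hk : k < 2 * d := hk
  exact ⟨interlace_le hθ (Nat.zero_le k) hk, interlace_lt_add_two_pi hθ hθ2π (by omega) hk⟩

theorem sinProd_even_sign_at_odd (hθ : ∀ i j : ℕ, i < j → j < 2 * d → θ i < θ j)
    (hθ2π : θ (2 * d - 1) < θ 0 + 2 * π) {j : ℕ} (hj : j < d) :
    0 < (-1) ^ (d - (j + 1)) * sinProd (fun k => θ (2 * k)) d (θ (2 * j + 1)) :=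
  neg_one_pow_mul_sinProd_pos hj
    (fun k hk => ⟨hθ _ _ (by omega) (by omega),
      interlace_lt_add_two_pi hθ hθ2π (by omega) (by omega)⟩)
    (fun k hk hkd => ⟨hθ _ _ (by omega) (by omega),
      interlace_lt_add_two_pi hθ hθ2π (by omega) (by omega)⟩)

theorem sinProd_odd_sign_at_zero (hθ : ∀ i j : ℕ, i < j → j < 2 * d → θ i < θ j)
    (hθ2π : θ (2 * d - 1) < θ 0 + 2 * π) :
    0 < (-1) ^ d * sinProd (fun k => θ (2 * k + 1)) d (θ 0) :=
  neg_one_pow_mul_sinProd_pos (Nat.zero_le d) (fun k hk => absurd hk (Nat.not_lt_zero k))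
    (fun k _ hkd => ⟨hθ _ _ (by omega) (by omega),
      interlace_lt_add_two_pi hθ hθ2π (by omega) (by omega)⟩)

theorem oddAnglesClosed_lt_succ (hθ : ∀ i j : ℕ, i < j → j < 2 * d → θ i < θ j)
    (hθ2π : θ (2 * d - 1) < θ 0 + 2 * π) {j : ℕ} (hj : j < d) :
    oddAnglesClosed θ d j < oddAnglesClosed θ d (j + 1) := by
  unfold oddAnglesClosed
  rw [if_pos hj]
  split_ifs with hj'
  · exact hθ _ _ (by omega) (by omega)
  · exact interlace_lt_add_two_pi hθ hθ2π (by omega) (by omega)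

theorem sinProd_odd_oddAnglesClosed (hd : 0 < d) (j : ℕ) :
    sinProd (fun k => θ (2 * k + 1)) d (oddAnglesClosed θ d j) = 0 := by
  unfold oddAnglesClosed
  split_ifs with hj'
  · exact sinProd_eq_zero hj'
  · rw [sinProd_add_two_pi, sinProd_eq_zero (φ := fun k => θ (2 * k + 1)) hd, mul_zero]

theorem sinProd_even_oddAnglesClosed_mul_neg
    (hθ : ∀ i j : ℕ, i < j → j < 2 * d → θ i < θ j)
    (hθ2π : θ (2 * d - 1) < θ 0 + 2 * π) {j : ℕ} (hj : j < d) :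
    sinProd (fun k => θ (2 * k)) d (oddAnglesClosed θ d j)
      * sinProd (fun k => θ (2 * k)) d (oddAnglesClosed θ d (j + 1)) < 0 := by
  have hj0 := sinProd_even_sign_at_odd hθ hθ2π hj
  unfold oddAnglesClosed
  rw [if_pos hj]
  split_ifs with hj'
  · have hj1 := sinProd_even_sign_at_odd hθ hθ2π hj'
    rw [show d - (j + 1) = d - (j + 1 + 1) + 1 by omega] at hj0
    exact mul_neg_of_neg_one_pow_mul_pos hj0 hj1
  · obtain rfl : d = j + 1 := by omega
    have h1 := sinProd_even_sign_at_odd hθ hθ2π (Nat.zero_lt_succ j)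
    simp only [zero_add, Nat.add_sub_cancel, Nat.sub_self] at h1 hj0
    rw [sinProd_add_two_pi, mul_comm]
    refine mul_neg_of_neg_one_pow_mul_pos (n := 0) ?_ hj0
    convert h1 using 1
    ring

end Interlacing

theorem exists_aeval_sub_I_mul_aeval_exp_mul_I_eq {P Q : ℝ[X]} {d : ℕ} (hd : 0 < d)
    (hP : P.natDegree = d) (hQ : Q.natDegree = d)
    (hPrec : reflect d P = P) (hQanti : reflect d Q = -Q) {θ : ℕ → ℝ}
    (hθ : ∀ i j : ℕ, i < j → j < 2 * d → θ i < θ j)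
    (hθ2π : θ (2 * d - 1) < θ 0 + 2 * π)
    (hProots : ∀ j < d, aeval (Complex.exp (θ (2 * j) * I)) P = 0)
    (hQroots : ∀ j < d, aeval (Complex.exp (θ (2 * j + 1) * I)) Q = 0) :
    ∃ a b : ℝ, a ≠ 0 ∧ ∀ t : ℝ,
      aeval (Complex.exp (t * I)) P - I * aeval (Complex.exp (t * I)) Q
        = Complex.exp ((d * t / 2 : ℝ) * I) * (a * sinProd (fun k => θ (2 * k)) d t
          + b * sinProd (fun k => θ (2 * k + 1)) d t : ℝ) := by
  have hinj {f : ℕ → ℕ} (hf : f.Injective) (hfd : ∀ k < d, f k < 2 * d) :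
      Set.InjOn (fun k => Complex.exp (θ (f k) * I)) (range d) :=
    (interlace_injOn_exp hθ hθ2π).comp hf.injOn fun k hk => hfd k (mem_range.1 hk)
  obtain ⟨CP, hCP0, hCP⟩ := exists_aeval_exp_mul_I_eq hP (ne_zero_of_natDegree_gt (hP ▸ hd))
    (hinj (f := (2 * ·)) (fun i j h => by dsimp only at h; omega) fun k hk => by omega) hProots
  obtain ⟨CQ, -, hCQ⟩ := exists_aeval_exp_mul_I_eq hQ (ne_zero_of_natDegree_gt (hQ ▸ hd))
    (hinj (f := (2 * · + 1)) (fun i j h => by dsimp only at h; omega) fun k hk => by omega) hQroots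
  obtain ⟨a, rfl⟩ : ∃ a : ℝ, (a : ℂ) = CP := by
    have := mul_conj_eq_of_forall_aeval_exp_mul_I_eq hP.le (σ := 1) (by rw [one_smul, hPrec]) hCP
      (right_ne_zero_of_mul (sinProd_even_sign_at_odd hθ hθ2π hd).ne')
    exact ⟨CP.re, Complex.conj_eq_iff_re.1 (by simpa using this)⟩
  obtain ⟨b, rfl⟩ : ∃ b : ℝ, (b : ℂ) * I = CQ := by
    have := mul_conj_eq_of_forall_aeval_exp_mul_I_eq hQ.le (σ := -1) (by rw [neg_one_smul, hQanti])
      hCQ (right_ne_zero_of_mul (sinProd_odd_sign_at_zero hθ hθ2π).ne')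
    have hre : CQ.re = 0 := by
      have := congrArg Complex.re this
      simp only [Complex.ofReal_neg, Complex.ofReal_one, neg_mul, one_mul, Complex.neg_re,
        Complex.conj_re] at this
      linarith
    exact ⟨CQ.im, Complex.ext (by simp [hre]) (by simp)⟩
  refine ⟨a, b, fun h => hCP0 (by rw [h, Complex.ofReal_zero]), fun t => ?_⟩
  rw [hCP, hCQ, Complex.ofReal_add, Complex.ofReal_mul, Complex.ofReal_mul]
  linear_combination (-(b : ℂ) * Complex.exp ((d * t / 2 : ℝ) * I)
    * sinProd (fun k => θ (2 * k + 1)) d t) * Complex.I_sq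

theorem norm_eq_one_of_aeval_sub_I_mul_aeval_eq_zero {P Q : ℝ[X]} {d : ℕ} (hd : 0 < d)
    (hP : P.natDegree = d) (hQ : Q.natDegree = d)
    (hPrec : reflect d P = P) (hQanti : reflect d Q = -Q) {θ : ℕ → ℝ}
    (hθ : ∀ i j : ℕ, i < j → j < 2 * d → θ i < θ j)
    (hθ2π : θ (2 * d - 1) < θ 0 + 2 * π)
    (hProots : ∀ j < d, aeval (Complex.exp (θ (2 * j) * I)) P = 0)
    (hQroots : ∀ j < d, aeval (Complex.exp (θ (2 * j + 1) * I)) Q = 0)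
    {w : ℂ} (hw : aeval w P - I * aeval w Q = 0) : ‖w‖ = 1 := by
  obtain ⟨a, b, ha, hPQ⟩ :=
    exists_aeval_sub_I_mul_aeval_exp_mul_I_eq hd hP hQ hPrec hQanti hθ hθ2π hProots hQroots
  set H := fun t =>
    a * sinProd (fun k => θ (2 * k)) d t + b * sinProd (fun k => θ (2 * k + 1)) d t
  have hH : Continuous H := by simp only [H, sinProd]; fun_prop
  obtain ⟨S, hS, hSH⟩ := exists_card_eq_of_sign_changes hH (t := oddAnglesClosed θ d)
    (fun j hj => oddAnglesClosed_lt_succ hθ hθ2π hj) (by simp [oddAnglesClosed, hd])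
    (fun j hj => by
      simp only [H, sinProd_odd_oddAnglesClosed hd, mul_zero, add_zero]
      nlinarith [mul_self_pos.2 ha, sinProd_even_oddAnglesClosed_mul_neg hθ hθ2π hj])
  have hwS := mem_of_aeval_sub_I_mul_aeval_eq_zero (ne_zero_of_natDegree_gt (hP ▸ hd)) hP hQ.le
    (S := S) (fun x hx => by
      obtain ⟨u, hu, rfl⟩ := hSH x hx
      simp only [H] at hu
      rw [hPQ, hu, Complex.ofReal_zero, mul_zero]) hS.ge hw
  obtain ⟨u, -, rfl⟩ := hSH w hwS
  exact Complex.norm_exp_ofReal_mul_I u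

theorem stmt_14_general (P Q : Polynomial ℝ) (d : ℕ)
    (hP : P.natDegree = d) (hQ : Q.natDegree = d)
    (hPrec : Polynomial.reflect d P = P)
    (hQanti : Polynomial.reflect d Q = -Q)
    (hint : UnitCircleInterlace P Q d) :
    ∀ z : ℂ, Polynomial.aeval z (P ^ 2 + Q ^ 2) = 0 → ‖z‖ = 1 := by
  intro z hz
  obtain ⟨θ, hθ, hθ2π, hProots, hQroots⟩ := hint
  rcases Nat.eq_zero_or_pos d with rfl | hd
  · -- in degree `0`, antireciprocity forces `Q = 0`, whereas `Q` has no roots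
    have hQ0 : Q = 0 := by
      have hQC := eq_C_of_natDegree_eq_zero hQ
      rw [hQC, reflect_C, pow_zero, mul_one, ← C_neg, C_inj] at hQanti
      rw [hQC, show Q.coeff 0 = 0 by linarith, C_0]
    obtain ⟨j, hj, -⟩ := (hQroots 0).1 (by simp [hQ0])
    exact absurd hj (Nat.not_lt_zero j)
  have key := fun {w : ℂ} => norm_eq_one_of_aeval_sub_I_mul_aeval_eq_zero (w := w) hd hP hQ
    hPrec hQanti hθ hθ2π (fun j hj => (hProots _).2 ⟨j, hj, rfl⟩)
    (fun j hj => (hQroots _).2 ⟨j, hj, rfl⟩)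
  have hfac : (aeval z P + I * aeval z Q) * (aeval z P - I * aeval z Q) = 0 := by
    rw [map_add, map_pow, map_pow] at hz
    linear_combination hz - aeval z Q ^ 2 * Complex.I_sq
  rcases mul_eq_zero.1 hfac with h | h
  · rw [← Complex.norm_conj]
    apply key
    have hconj := congrArg conj h
    simp only [map_add, map_mul, Complex.conj_I, ← aeval_conj, map_zero] at hconj
    linear_combination hconj
  · exact key h

theorem stmt_14 (P Q : Polynomial ℝ) (d : ℕ)
    (hcop : IsCoprime P Q)
    (hP : P.natDegree = d) (hQ : Q.natDegree = d)
    (hPlead : 0 < P.leadingCoeff) (hQlead : 0 < Q.leadingCoeff)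
    (hPrec : Polynomial.reflect d P = P)
    (hQanti : Polynomial.reflect d Q = -Q)
    (hPsf : Squarefree P) (hQsf : Squarefree Q)
    (hint : UnitCircleInterlace P Q d) :
    ∀ z : ℂ, Polynomial.aeval z (P ^ 2 + Q ^ 2) = 0 → ‖z‖ = 1 :=
  stmt_14_general P Q d hP hQ hPrec hQanti hint
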